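/- arXiv:2508.14386 — 10 statements merged into one kernel-verified Lean document; each statement's English description precedes it below -/
import Mathlib

section
/- For any sequence x over a q-ary alphabet of length n and any t ≥ 0, the number of distinct sequences obtainable from x by deleting exactly t symbols is at most C(r(x)+t-1, t), where r(x) is the number of runs of x. -/
/-- The t-deletion ball: length-(|x|-t) subsequences of x. -/
def dBall {α : Type*} (t : ℕ) (x : List α) : Set (List α) :=
  {z | z.Sublist x ∧ z.length + t = x.length}

/-- Number of runs of a sequence. -/
def nRuns {α : Type*} [DecidableEq α] (x : List α) : ℕ :=
  (x.destutter (· ≠ ·)).length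

/-!
Split off the leading run `a^m` of `x`, so that `x = a^m ++ y` with `r(y) = r(x) - 1`. A
subsequence of `x` that deletes `d ≤ t` symbols of this run is `a^(m-d)` followed by a
`(t-d)`-deletion of `y`, so by induction `|D_t(x)| ≤ ∑_{s ≤ t} C(r(y)+s-1, s) ≤ C(r(y)+t, t)`,
the last step being the hockey-stick identity.
-/

open Finset

section Runs

variable {α : Type*} [DecidableEq α]

theorem nRuns_cons_cons_self (a : α) (l : List α) : nRuns (a :: a :: l) = nRuns (a :: l) := by
  simp [nRuns, List.destutter_cons']

theorem nRuns_cons_cons_of_ne {a b : α} (h : a ≠ b) (l : List α) :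
    nRuns (a :: b :: l) = nRuns (b :: l) + 1 := by
  simp [nRuns, List.destutter_cons', h]

theorem exists_eq_replicate_append_nRuns (a : α) (l : List α) :
    ∃ m y, 0 < m ∧ a :: l = List.replicate m a ++ y ∧ nRuns (a :: l) = nRuns y + 1 := by
  induction l generalizing a with
  | nil => exact ⟨1, [], one_pos, rfl, by simp [nRuns]⟩
  | cons b l ih =>
    by_cases hab : a = b
    · subst hab
      obtain ⟨m, y, -, hl, hr⟩ := ih a
      exact ⟨m + 1, y, m.succ_pos, by rw [hl]; rfl, by rw [nRuns_cons_cons_self, hr]⟩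
    · exact ⟨1, b :: l, one_pos, rfl, nRuns_cons_cons_of_ne hab l⟩

end Runs

section DeletionBall

variable {α : Type*} [DecidableEq α]

def dBallFinset (t : ℕ) (x : List α) : Finset (List α) :=
  x.sublists.toFinset.filter (·.length + t = x.length)

@[simp]
theorem mem_dBallFinset {t : ℕ} {x z : List α} :
    z ∈ dBallFinset t x ↔ z.Sublist x ∧ z.length + t = x.length := by
  simp [dBallFinset]

theorem coe_dBallFinset (t : ℕ) (x : List α) : (dBallFinset t x : Set (List α)) = dBall t x := by
  ext z
  simp [dBall]

theorem dBallFinset_replicate_append_subset (t m : ℕ) (a : α) (y : List α) :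
    dBallFinset t (List.replicate m a ++ y) ⊆
      (range (t + 1)).biUnion fun d =>
        (dBallFinset (t - d) y).image (List.replicate (m - d) a ++ ·) := by
  intro z hz
  obtain ⟨hzx, hlen⟩ := mem_dBallFinset.1 hz
  obtain ⟨z₁, z₂, rfl, hz₁, hz₂⟩ := List.sublist_append_iff.1 hzx
  obtain ⟨k, hkm, rfl⟩ := List.sublist_replicate_iff.1 hz₁
  have := hz₂.length_le
  simp only [List.length_append, List.length_replicate] at hlen
  simp only [mem_biUnion, mem_range, mem_image, mem_dBallFinset]
  exact ⟨m - k, by omega, z₂, ⟨hz₂, by omega⟩, by rw [Nat.sub_sub_self hkm]⟩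

theorem card_dBallFinset_replicate_append_le (t m : ℕ) (a : α) (y : List α) :
    #(dBallFinset t (List.replicate m a ++ y)) ≤ ∑ d ∈ range (t + 1), #(dBallFinset (t - d) y) :=
  calc #(dBallFinset t (List.replicate m a ++ y))
      ≤ #((range (t + 1)).biUnion fun d =>
          (dBallFinset (t - d) y).image (List.replicate (m - d) a ++ ·)) :=
        card_le_card (dBallFinset_replicate_append_subset t m a y)
    _ ≤ ∑ d ∈ range (t + 1), #((dBallFinset (t - d) y).image (List.replicate (m - d) a ++ ·)) :=
        card_biUnion_le
    _ ≤ ∑ d ∈ range (t + 1), #(dBallFinset (t - d) y) :=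
        sum_le_sum fun _ _ => card_image_le

end DeletionBall

/-- Hockey stick; an equality except at `r = 0`, where `r + s - 1` truncates. -/
theorem Nat.sum_range_choose_add_sub_one_le (r t : ℕ) :
    ∑ s ∈ range (t + 1), (r + s - 1).choose s ≤ (r + t).choose t := by
  induction t with
  | zero => simp
  | succ t ih =>
    rw [sum_range_succ, show r + (t + 1) - 1 = r + t by omega, ← add_assoc, Nat.choose_succ_succ]
    exact Nat.add_le_add_right ih _

theorem card_dBallFinset_le {α : Type*} [DecidableEq α] (t : ℕ) (x : List α) :
    #(dBallFinset t x) ≤ (nRuns x + t - 1).choose t := by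
  rcases x with _ | ⟨a, l⟩
  · cases t <;> simp [nRuns, dBallFinset, filter_singleton]
  obtain ⟨m, y, hm, hx, hr⟩ := exists_eq_replicate_append_nRuns a l
  have hy : y.length ≤ l.length := by
    have := congrArg List.length hx
    simp only [List.length_cons, List.length_append, List.length_replicate] at this
    omega
  calc #(dBallFinset t (a :: l))
      ≤ ∑ d ∈ range (t + 1), #(dBallFinset (t - d) y) := by
        rw [hx]; exact card_dBallFinset_replicate_append_le t m a y
    _ ≤ ∑ d ∈ range (t + 1), (nRuns y + (t - d) - 1).choose (t - d) :=
        sum_le_sum fun d _ => card_dBallFinset_le (t - d) y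
    _ = ∑ s ∈ range (t + 1), (nRuns y + s - 1).choose s := by
        simpa using sum_range_reflect (fun s => (nRuns y + s - 1).choose s) (t + 1)
    _ ≤ (nRuns y + t).choose t := Nat.sum_range_choose_add_sub_one_le _ _
    _ = (nRuns (a :: l) + t - 1).choose t := by rw [hr]; congr 1; omega
termination_by x.length

theorem stmt_1_general (q t : ℕ) (x : List (Fin q)) :
    (dBall t x).ncard ≤ Nat.choose (nRuns x + t - 1) t := by
  rw [← coe_dBallFinset, Set.ncard_coe_finset]
  exact card_dBallFinset_le t x

theorem stmt_1 (q n t : ℕ) (x : List (Fin q)) (hx : x.length = n) :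
    (dBall t x).ncard ≤ Nat.choose (nRuns x + t - 1) t :=
  stmt_1_general q t x
end

section
/- For any two sequences x, y of length n over a q-ary alphabet with longest common prefix u and longest common suffix v, writing x = u x̃ v and y = u ỹ v, the intersection of their t-deletion balls equals the union over all pairs (t1, t2) with t1 + t2 ≤ t of the concatenations D_{t1}(u) ∘ (D_{t−t1−t2}(x̃) ∩ D_{t−t1−t2}(ỹ)) ∘ D_{t2}(v). -/
lemma split_sub {α : Type*} {w u s : List α} (h : w.Sublist (u ++ s)) :
    ∃ k, k ≤ w.length ∧ (w.take k).Sublist u ∧ (w.drop k).Sublist s := by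
  obtain ⟨a, b, rfl, ha, hb⟩ := List.sublist_append_iff.mp h
  exact ⟨a.length, by simp, by simpa using ha, by simpa using hb⟩

theorem stmt_4 (q n t : ℕ) (x y u v xt yt : List (Fin q))
    (hx : x = u ++ xt ++ v) (hy : y = u ++ yt ++ v)
    (hxn : x.length = n) (hyn : y.length = n) (hxy : x ≠ y)
    (hxt : xt ≠ []) (hyt : yt ≠ [])
    (hhead : ∀ (h1 : xt ≠ []) (h2 : yt ≠ []), xt.head h1 ≠ yt.head h2)
    (hlast : ∀ (h1 : xt ≠ []) (h2 : yt ≠ []), xt.getLast h1 ≠ yt.getLast h2) :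
    dBall t x ∩ dBall t y =
      ⋃ (t1 : ℕ) (t2 : ℕ) (_ : t1 + t2 ≤ t),
        {w | ∃ a ∈ dBall t1 u,
             ∃ c ∈ dBall (t - t1 - t2) xt ∩ dBall (t - t1 - t2) yt,
             ∃ b ∈ dBall t2 v, w = a ++ c ++ b} := by
  subst hx hy
  ext w
  simp only [dBall, Set.mem_inter_iff, Set.mem_iUnion, Set.mem_setOf_eq]
  constructor
  · rintro ⟨⟨hwx, hwlx⟩, ⟨hwy, hwly⟩⟩
    have hx1 : w.Sublist (u ++ (xt ++ v)) := by simpa [List.append_assoc] using hwx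
    have hy1 : w.Sublist (u ++ (yt ++ v)) := by simpa [List.append_assoc] using hwy
    obtain ⟨k₁, hk₁, ha₁, hr₁⟩ := split_sub hx1
    obtain ⟨k₂, hk₂, ha₂, hr₂⟩ := split_sub hy1
    set k := max k₁ k₂ with hk
    have hkw : k ≤ w.length := by omega
    have hau : (w.take k).Sublist u := by
      rcases Nat.le_total k₁ k₂ with h | h
      · rw [hk, Nat.max_eq_right h]; exact ha₂
      · rw [hk, Nat.max_eq_left h]; exact ha₁
    have hdk : ∀ j, j ≤ k → w.drop k = (w.drop j).drop (k - j) := by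
      intro j hj
      rw [List.drop_drop]
      congr 1
      omega
    have hdrop1 : (w.drop k).Sublist (xt ++ v) := by
      rw [hdk k₁ (le_max_left _ _)]
      exact (List.drop_sublist _ _).trans hr₁
    have hdrop2 : (w.drop k).Sublist (yt ++ v) := by
      rw [hdk k₂ (le_max_right _ _)]
      exact (List.drop_sublist _ _).trans hr₂
    obtain ⟨m₁, hm₁, hc₁, hb₁⟩ := split_sub hdrop1
    obtain ⟨m₂, hm₂, hc₂, hb₂⟩ := split_sub hdrop2
    set m := min m₁ m₂ with hm
    have htk : ∀ j, m ≤ j → (w.drop k).take m = ((w.drop k).take j).take m := by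
      intro j hj
      rw [List.take_take, Nat.min_eq_left hj]
    have hcx : ((w.drop k).take m).Sublist xt := by
      rw [htk m₁ (min_le_left _ _)]
      exact (List.take_sublist _ _).trans hc₁
    have hcy : ((w.drop k).take m).Sublist yt := by
      rw [htk m₂ (min_le_right _ _)]
      exact (List.take_sublist _ _).trans hc₂
    have hbv : ((w.drop k).drop m).Sublist v := by
      rcases Nat.le_total m₁ m₂ with h | h
      · rw [hm, Nat.min_eq_left h]; exact hb₁
      · rw [hm, Nat.min_eq_right h]; exact hb₂
    -- length facts
    have l1 : (w.take k).length = k := by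
      rw [List.length_take]; omega
    have l2 : (w.drop k).length = w.length - k := by simp
    have l3 : ((w.drop k).take m).length = m := by
      rw [List.length_take]; omega
    have l4 : ((w.drop k).drop m).length = w.length - k - m := by simp; omega
    have la : k ≤ u.length := l1 ▸ hau.length_le
    have lc : m ≤ xt.length := l3 ▸ hcx.length_le
    have lb : w.length - k - m ≤ v.length := l4 ▸ hbv.length_le
    have hwlx' : w.length + t = u.length + (xt.length + v.length) := by
      simpa [List.length_append] using hwlx
    have hwly' : w.length + t = u.length + (yt.length + v.length) := by
      simpa [List.length_append] using hwly
    refine ⟨u.length - k, v.length - (w.length - k - m), by omega,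
      w.take k, ⟨hau, by omega⟩,
      (w.drop k).take m, ⟨⟨hcx, by omega⟩, ⟨hcy, by omega⟩⟩,
      (w.drop k).drop m, ⟨hbv, by omega⟩, ?_⟩
    rw [List.append_assoc, List.take_append_drop, List.take_append_drop]
  · rintro ⟨t1, t2, ht12, a, ⟨hau, hal⟩, c, ⟨⟨hcx, hclx⟩, ⟨hcy, hcly⟩⟩, b, ⟨hbv, hbl⟩, rfl⟩
    have hsx : (a ++ c ++ b).Sublist (u ++ xt ++ v) := (hau.append hcx).append hbv
    have hsy : (a ++ c ++ b).Sublist (u ++ yt ++ v) := (hau.append hcy).append hbv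
    refine ⟨⟨hsx, ?_⟩, ⟨hsy, ?_⟩⟩ <;> simp [List.length_append] <;> omega
end

section
/- For any two distinct sequences x, y of the same length over a q-ary alphabet, the intersection of their single-insertion balls contains at most 2 elements: |I_1(x) ∩ I_1(y)| ≤ 2. -/
/-!
Induct on the common length, comparing first letters. If `x = a :: x'` and `y = a :: y'`,
a common supersequence one letter longer either starts with `a`, and then its tail is a common
supersequence of `x'` and `y'`, or it starts with some `b ≠ a`, and then its tail is both `x` and
`y`, which is impossible. If `x = a :: x'` and `y = c :: y'` with `a ≠ c`, the first letter of the
supersequence is spent on one of them and its tail is the other one, so it is `a :: y` or `c :: x`.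
-/

/-- The t-insertion ball: length-(|x|+t) supersequences of x. -/
def iBall {α : Type*} (t : ℕ) (x : List α) : Set (List α) :=
  {z | x.Sublist z ∧ z.length = x.length + t}

namespace iBall

variable {α : Type*}

theorem cons_mem_cons_iff {t : ℕ} {a : α} {x z : List α} :
    a :: z ∈ iBall t (a :: x) ↔ z ∈ iBall t x := by
  simp only [iBall, Set.mem_ofPred_eq, List.cons_sublist_cons, List.length_cons,
    Nat.add_right_comm _ 1 t, Nat.add_right_cancel_iff]

theorem cons_mem_one_cons_iff_of_ne {a b : α} {x z : List α} (hba : b ≠ a) :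
    b :: z ∈ iBall 1 (a :: x) ↔ z = a :: x := by
  refine ⟨fun ⟨hsub, hlen⟩ => ?_, fun hz => ?_⟩
  · have hsub' : (a :: x).Sublist z := by
      simpa [List.sublist_cons_iff, Ne.symm hba] using hsub
    exact (hsub'.eq_of_length (by simpa using hlen.symm)).symm
  · subst hz
    exact ⟨List.sublist_cons_self _ _, rfl⟩

theorem nil_notMem_one (x : List α) : [] ∉ iBall 1 x := by
  simp [iBall]

theorem exists_inter_one_subset_pair :
    ∀ {x y : List α}, x.length = y.length → x ≠ y →
      ∃ w₁ w₂, iBall 1 x ∩ iBall 1 y ⊆ {w₁, w₂}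
  | [], [], _, hxy => absurd rfl hxy
  | [], _ :: _, hlen, _ | _ :: _, [], hlen, _ => by simp at hlen
  | a :: x, c :: y, hlen, hxy => by
    by_cases hac : a = c
    · subst hac
      obtain ⟨w₁, w₂, hw⟩ :=
        exists_inter_one_subset_pair (x := x) (y := y) (by simpa using hlen) (by simpa using hxy)
      refine ⟨a :: w₁, a :: w₂, ?_⟩
      rintro (_ | ⟨b, z⟩) ⟨hx, hy⟩
      · exact absurd hx (nil_notMem_one _)
      by_cases hba : b = a
      · subst hba
        rcases hw ⟨cons_mem_cons_iff.1 hx, cons_mem_cons_iff.1 hy⟩ with rfl | rfl <;> simp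
      · have hzx := (cons_mem_one_cons_iff_of_ne hba).1 hx
        have hzy := (cons_mem_one_cons_iff_of_ne hba).1 hy
        exact absurd (hzx.symm.trans hzy) hxy
    · refine ⟨a :: c :: y, c :: a :: x, ?_⟩
      rintro (_ | ⟨b, z⟩) ⟨hx, hy⟩
      · exact absurd hx (nil_notMem_one _)
      by_cases hba : b = a
      · subst hba
        simp [(cons_mem_one_cons_iff_of_ne hac).1 hy]
      · have hzx := (cons_mem_one_cons_iff_of_ne hba).1 hx
        by_cases hbc : b = c
        · simp [hbc, hzx]
        · exact absurd (hzx.symm.trans ((cons_mem_one_cons_iff_of_ne hbc).1 hy)) hxy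

theorem ncard_inter_one_le_two {x y : List α} (hlen : x.length = y.length) (hxy : x ≠ y) :
    (iBall 1 x ∩ iBall 1 y).ncard ≤ 2 := by
  obtain ⟨w₁, w₂, hw⟩ := exists_inter_one_subset_pair hlen hxy
  calc (iBall 1 x ∩ iBall 1 y).ncard
      ≤ ({w₁, w₂} : Set (List α)).ncard := Set.ncard_le_ncard hw (Set.toFinite _)
    _ ≤ ({w₂} : Set (List α)).ncard + 1 := Set.ncard_insert_le _ _
    _ = 2 := by rw [Set.ncard_singleton]

end iBall

theorem stmt_8 (q n : ℕ) (x y : List (Fin q))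
    (hx : x.length = n) (hy : y.length = n) (hxy : x ≠ y) :
    (iBall 1 x ∩ iBall 1 y).ncard ≤ 2 :=
  iBall.ncard_inter_one_le_two (hx.trans hy.symm) hxy
end

section
/- Let x and y be distinct sequences of length n over Σ_q with |I_1(x) ∩ I_1(y)| = 2, and let ℓ and k be respectively the smallest and largest indices at which x and y differ. Then I_1(x) ∩ I_1(y) = {z, z'} where z = x_{[1,ℓ−1]} y_ℓ x_{[ℓ,n]} = y_{[1,k]} x_k y_{[k+1,n]} and z' = x_{[1,k]} y_k x_{[k+1,n]} = y_{[1,ℓ−1]} x_ℓ y_{[ℓ,n]}. -/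
/-!
If `z` arises from `x` by inserting at position `p` and from `y` by inserting at position
`r ≥ p`, then `x` and `y` agree before `p` and from `r` on, so every index where they differ lies
in `[p, r)`. Since `z` copies `y` before `r` and `x` shifted by one after `p`, it follows that `z`
is `x` with `y ℓ` inserted at the first difference `ℓ`, and also `y` with `x k` inserted after the
last difference `k`. With the roles of `x` and `y` exchanged when `r < p`, every common
supersequence is one of the two words of the statement; as there are two of them, both occur.
-/

namespace List

variable {α : Type*}

section Insert

variable {l : List α} {p i : ℕ} {a : α}

theorem getElem?_take_append_cons_drop_of_lt (hp : p ≤ l.length) (h : i < p) :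
    (l.take p ++ a :: l.drop p)[i]? = l[i]? := by
  rw [getElem?_append_left (by simp; omega), getElem?_take_of_lt h]

theorem getElem?_take_append_cons_drop_succ (hp : p ≤ l.length) (h : p ≤ i) :
    (l.take p ++ a :: l.drop p)[i + 1]? = l[i]? := by
  rw [getElem?_append_right (by simp; omega), length_take, Nat.min_eq_left hp,
    show i + 1 - p = (i - p) + 1 by omega, getElem?_cons_succ, getElem?_drop,
    Nat.add_sub_cancel' h]

theorem take_take_append_cons_drop_of_le (hp : p ≤ l.length) (h : i ≤ p) :
    (l.take p ++ a :: l.drop p).take i = l.take i := by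
  rw [take_append_of_le_length (by simp; omega), take_take, Nat.min_eq_left h]

theorem drop_succ_take_append_cons_drop_of_le (hp : p ≤ l.length) (h : p ≤ i) :
    (l.take p ++ a :: l.drop p).drop (i + 1) = l.drop i := by
  rw [drop_append, drop_of_length_le (by simp; omega), length_take, Nat.min_eq_left hp,
    show i + 1 - p = (i - p) + 1 by omega, nil_append, drop_succ_cons, drop_drop,
    Nat.add_sub_cancel' h]

theorem eq_take_append_cons_drop_of_getElem?_eq {z : List α} (h : z[i]? = some a) :
    z = z.take i ++ a :: z.drop (i + 1) := by
  obtain ⟨hi, rfl⟩ := getElem?_eq_some_iff.1 h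
  rw [← drop_eq_getElem_cons hi, take_append_drop]

theorem Sublist.exists_eq_take_append_cons_drop {z : List α} (h : l <+ z)
    (hlen : z.length = l.length + 1) :
    ∃ p ≤ l.length, ∃ a, z = l.take p ++ a :: l.drop p := by
  induction h with
  | slnil => simp at hlen
  | @cons l₁ l₂ b h ih =>
      have hl : l₁ = l₂ := h.eq_of_length (by simp at hlen; omega)
      exact ⟨0, Nat.zero_le _, b, by simp [hl]⟩
  | @cons_cons l₁ l₂ b h ih =>
      obtain ⟨p, hp, c, hz⟩ := ih (by simpa using hlen)
      exact ⟨p + 1, by simpa using hp, c, by simp [hz]⟩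

end Insert

section TwoInsertions

variable {l₁ l₂ : List α} {p r i : ℕ} {a b : α}

theorem mem_Ico_of_take_append_cons_drop_eq (hp : p ≤ l₁.length)
    (hr : r ≤ l₂.length) (hpr : p ≤ r)
    (h : l₁.take p ++ a :: l₁.drop p = l₂.take r ++ b :: l₂.drop r)
    (hi : l₁[i]? ≠ l₂[i]?) : i ∈ Set.Ico p r := by
  constructor
  · by_contra! hip
    apply hi
    rw [← getElem?_take_append_cons_drop_of_lt hp hip (a := a), h,
      getElem?_take_append_cons_drop_of_lt hr (by omega)]
  · by_contra! hri
    apply hi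
    rw [← getElem?_take_append_cons_drop_succ hp (by omega) (a := a), h,
      getElem?_take_append_cons_drop_succ hr hri]

theorem take_append_cons_drop_eq_of_take_eq (hp : p ≤ l₁.length) (hr : r ≤ l₂.length)
    (h : l₁.take p ++ a :: l₁.drop p = l₂.take r ++ b :: l₂.drop r)
    (hpi : p ≤ i) (hir : i < r) (htake : l₁.take i = l₂.take i) {c : α}
    (hc : l₂[i]? = some c) :
    l₁.take p ++ a :: l₁.drop p = l₁.take i ++ c :: l₁.drop i := by
  have hzi : (l₁.take p ++ a :: l₁.drop p)[i]? = some c := by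
    rw [h, getElem?_take_append_cons_drop_of_lt hr hir, hc]
  rw [eq_take_append_cons_drop_of_getElem?_eq hzi, drop_succ_take_append_cons_drop_of_le hp hpi,
    h, take_take_append_cons_drop_of_le hr hir.le, htake]

theorem take_append_cons_drop_eq_of_drop_eq (hp : p ≤ l₁.length) (hr : r ≤ l₂.length)
    (h : l₁.take p ++ a :: l₁.drop p = l₂.take r ++ b :: l₂.drop r)
    (hpi : p ≤ i) (hir : i < r) (hdrop : l₁.drop (i + 1) = l₂.drop (i + 1)) {d : α}
    (hd : l₁[i]? = some d) :
    l₁.take p ++ a :: l₁.drop p = l₂.take (i + 1) ++ d :: l₂.drop (i + 1) := by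
  have hzi : (l₁.take p ++ a :: l₁.drop p)[i + 1]? = some d := by
    rw [getElem?_take_append_cons_drop_succ hp hpi, hd]
  rw [eq_take_append_cons_drop_of_getElem?_eq hzi,
    drop_succ_take_append_cons_drop_of_le hp (by omega), hdrop, h,
    take_take_append_cons_drop_of_le hr hir]

end TwoInsertions

section OfFn

variable {n m : ℕ} {x y : Fin n → α}

theorem take_ofFn_eq_take_ofFn (h : ∀ i : Fin n, (i : ℕ) < m → x i = y i) :
    (ofFn x).take m = (ofFn y).take m := by
  refine ext_getElem? fun i => ?_
  simp only [getElem?_take, List.getElem?_ofFn]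
  split_ifs with him hin
  · simp [h ⟨i, hin⟩ him]
  all_goals rfl

theorem drop_ofFn_eq_drop_ofFn (h : ∀ i : Fin n, m ≤ (i : ℕ) → x i = y i) :
    (ofFn x).drop m = (ofFn y).drop m := by
  refine ext_getElem? fun i => ?_
  simp only [getElem?_drop, List.getElem?_ofFn]
  split_ifs with hin
  · simp [h ⟨m + i, hin⟩ (Nat.le_add_right m i)]
  · rfl

end OfFn

end List

open List in
theorem eq_or_eq_of_mem_iBall_one_inter_iBall_one {α : Type*} {n : ℕ} {x y : Fin n → α}
    {ℓ k : Fin n}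
    (hℓ : x ℓ ≠ y ℓ) (hℓmin : ∀ i : Fin n, i < ℓ → x i = y i)
    (hk : x k ≠ y k) (hkmax : ∀ i : Fin n, k < i → x i = y i)
    {z : List α} (hz : z ∈ iBall 1 (ofFn x) ∩ iBall 1 (ofFn y)) :
    (z = (ofFn x).take ℓ ++ y ℓ :: (ofFn x).drop ℓ ∧
      z = (ofFn y).take (k + 1) ++ x k :: (ofFn y).drop (k + 1)) ∨
    (z = (ofFn y).take ℓ ++ x ℓ :: (ofFn y).drop ℓ ∧
      z = (ofFn x).take (k + 1) ++ y k :: (ofFn x).drop (k + 1)) := by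
  obtain ⟨⟨hx, hxlen⟩, hy, hylen⟩ := hz
  obtain ⟨p, hp, a, rfl⟩ := hx.exists_eq_take_append_cons_drop hxlen
  obtain ⟨r, hr, b, h⟩ := hy.exists_eq_take_append_cons_drop hylen
  have htake : (ofFn x).take ℓ = (ofFn y).take ℓ := take_ofFn_eq_take_ofFn hℓmin
  have hdrop : (ofFn x).drop (k + 1) = (ofFn y).drop (k + 1) :=
    drop_ofFn_eq_drop_ofFn fun i hi => hkmax i hi
  have hℓ' : (ofFn x)[(ℓ : ℕ)]? ≠ (ofFn y)[(ℓ : ℕ)]? := by simpa using hℓ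
  have hk' : (ofFn x)[(k : ℕ)]? ≠ (ofFn y)[(k : ℕ)]? := by simpa using hk
  rcases le_total p r with hpr | hrp
  · obtain ⟨hpℓ, hℓr⟩ := mem_Ico_of_take_append_cons_drop_eq hp hr hpr h hℓ'
    obtain ⟨hpk, hkr⟩ := mem_Ico_of_take_append_cons_drop_eq hp hr hpr h hk'
    exact Or.inl ⟨take_append_cons_drop_eq_of_take_eq hp hr h hpℓ hℓr htake (by simp),
      take_append_cons_drop_eq_of_drop_eq hp hr h hpk hkr hdrop (by simp)⟩
  · obtain ⟨hrℓ, hℓp⟩ := mem_Ico_of_take_append_cons_drop_eq hr hp hrp h.symm hℓ'.symm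
    obtain ⟨hrk, hkp⟩ := mem_Ico_of_take_append_cons_drop_eq hr hp hrp h.symm hk'.symm
    rw [h]
    exact Or.inr ⟨take_append_cons_drop_eq_of_take_eq hr hp h.symm hrℓ hℓp htake.symm (by simp),
      take_append_cons_drop_eq_of_drop_eq hr hp h.symm hrk hkp hdrop.symm (by simp)⟩

theorem stmt_9_general (q n : ℕ) (x y : Fin n → Fin q)
    (ℓ k : Fin n)
    (hℓ : x ℓ ≠ y ℓ) (hℓmin : ∀ i : Fin n, i < ℓ → x i = y i)
    (hk : x k ≠ y k) (hkmax : ∀ i : Fin n, k < i → x i = y i)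
    (hcard : (iBall 1 (List.ofFn x) ∩ iBall 1 (List.ofFn y)).ncard = 2) :
    iBall 1 (List.ofFn x) ∩ iBall 1 (List.ofFn y) =
      {(List.ofFn x).take ℓ ++ y ℓ :: (List.ofFn x).drop ℓ,
       (List.ofFn x).take (k + 1) ++ y k :: (List.ofFn x).drop (k + 1)} ∧
    (List.ofFn x).take ℓ ++ y ℓ :: (List.ofFn x).drop ℓ =
      (List.ofFn y).take (k + 1) ++ x k :: (List.ofFn y).drop (k + 1) ∧
    (List.ofFn x).take (k + 1) ++ y k :: (List.ofFn x).drop (k + 1) =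
      (List.ofFn y).take ℓ ++ x ℓ :: (List.ofFn y).drop ℓ := by
  obtain ⟨z₁, z₂, hne, hS⟩ := Set.ncard_eq_two.mp hcard
  have classify := fun z (hz : z ∈ ({z₁, z₂} : Set _)) =>
    eq_or_eq_of_mem_iBall_one_inter_iBall_one hℓ hℓmin hk hkmax (hS ▸ hz)
  rcases classify z₁ (by simp) with ⟨e₁, e₂⟩ | ⟨e₁, e₂⟩ <;>
    rcases classify z₂ (by simp) with ⟨f₁, f₂⟩ | ⟨f₁, f₂⟩
  · exact absurd (e₁.trans f₁.symm) hne
  · exact ⟨by rw [hS, ← e₁, ← f₂], e₁.symm.trans e₂, f₂.symm.trans f₁⟩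
  · exact ⟨by rw [hS, ← f₁, ← e₂, Set.pair_comm], f₁.symm.trans f₂, e₂.symm.trans e₁⟩
  · exact absurd (e₁.trans f₁.symm) hne

theorem stmt_9 (q n : ℕ) (x y : Fin n → Fin q) (hxy : x ≠ y)
    (ℓ k : Fin n)
    (hℓ : x ℓ ≠ y ℓ) (hℓmin : ∀ i : Fin n, i < ℓ → x i = y i)
    (hk : x k ≠ y k) (hkmax : ∀ i : Fin n, k < i → x i = y i)
    (hcard : (iBall 1 (List.ofFn x) ∩ iBall 1 (List.ofFn y)).ncard = 2) :
    iBall 1 (List.ofFn x) ∩ iBall 1 (List.ofFn y) =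
      {(List.ofFn x).take ℓ ++ y ℓ :: (List.ofFn x).drop ℓ,
       (List.ofFn x).take (k + 1) ++ y k :: (List.ofFn x).drop (k + 1)} ∧
    (List.ofFn x).take ℓ ++ y ℓ :: (List.ofFn x).drop ℓ =
      (List.ofFn y).take (k + 1) ++ x k :: (List.ofFn y).drop (k + 1) ∧
    (List.ofFn x).take (k + 1) ++ y k :: (List.ofFn x).drop (k + 1) =
      (List.ofFn y).take ℓ ++ x ℓ :: (List.ofFn y).drop ℓ :=
  stmt_9_general q n x y ℓ k hℓ hℓmin hk hkmax hcard
end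

section
/- Let x = a r b and y = a' s b' be distinct sequences of length m ≥ 2 over a q-ary alphabet, where a ≠ a' and b ≠ b' are single symbols and r, s are sequences of length m−2. If the Levenshtein distance between x and y is at least 4, then |I_2(x) ∩ I_2(y)| ≤ 6. -/
theorem Set.encard_pair_le {α : Type*} (x y : α) : ({x, y} : Set α).encard ≤ 2 :=
  (Set.encard_insert_le _ _).trans (by rw [Set.encard_singleton]; rfl)

section iBall

variable {α : Type*} {t : ℕ} {c e f : α} {u w : List α}

theorem iBall_zero (u : List α) : iBall 0 u = {u} := by
  ext w
  exact ⟨fun h => (h.1.eq_of_length h.2.symm).symm,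
    fun h => ⟨h ▸ List.Sublist.refl _, h ▸ rfl⟩⟩

theorem reverse_mem_iBall_reverse_iff : w.reverse ∈ iBall t u.reverse ↔ w ∈ iBall t u := by
  simp [iBall]

theorem cons_mem_iBall_cons_iff : c :: w ∈ iBall t (c :: u) ↔ w ∈ iBall t u := by
  simp only [iBall, Set.mem_ofPred_eq, List.cons_sublist_cons, List.length_cons,
    Nat.add_right_comm _ 1 t, Nat.add_right_cancel_iff]

theorem mem_iBall_of_cons_mem_iBall_succ_cons (h : e :: w ∈ iBall (t + 1) (c :: u))
    (hne : e ≠ c) : w ∈ iBall t (c :: u) :=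
  ⟨h.1.of_cons_of_ne hne.symm, by have := h.2; simp only [List.length_cons] at this ⊢; omega⟩

theorem append_singleton_mem_iBall_append_singleton_iff :
    w ++ [c] ∈ iBall t (u ++ [c]) ↔ w ∈ iBall t u := by
  rw [← reverse_mem_iBall_reverse_iff]
  simp only [List.reverse_append, List.reverse_singleton, List.singleton_append]
  rw [cons_mem_iBall_cons_iff, reverse_mem_iBall_reverse_iff]

theorem mem_iBall_of_append_singleton_mem_iBall_succ (h : w ++ [f] ∈ iBall (t + 1) (u ++ [c]))
    (hne : f ≠ c) : w ∈ iBall t (u ++ [c]) := by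
  rw [← reverse_mem_iBall_reverse_iff] at h ⊢
  simp only [List.reverse_append, List.reverse_singleton, List.singleton_append] at h ⊢
  exact mem_iBall_of_cons_mem_iBall_succ_cons h hne

theorem eq_of_cons_mem_iBall_one_cons (h : e :: w ∈ iBall 1 (c :: u)) (hne : e ≠ c) :
    w = c :: u := by
  simpa [iBall_zero] using mem_iBall_of_cons_mem_iBall_succ_cons h hne

theorem iBall_inter_iBall_eq_empty_of_length_ne {v : List α} (h : u.length ≠ v.length) :
    iBall t u ∩ iBall t v = ∅ := by
  ext w
  simp only [iBall, Set.mem_inter_iff, Set.mem_ofPred_eq, Set.mem_empty_iff_false, iff_false]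
  omega

theorem ne_of_iBall_one_inter_eq_empty {v : List α}
    (h : iBall 1 (c :: u) ∩ iBall 1 (v ++ [f]) = ∅) : u ≠ v := by
  rintro rfl
  have hmem : c :: u ++ [f] ∈ iBall 1 (c :: u) ∩ iBall 1 (u ++ [f]) :=
    ⟨⟨List.sublist_append_left _ _, by simp⟩,
      ⟨(List.sublist_cons_self c u).append_right _, by simp⟩⟩
  simp [h] at hmem

theorem iBall_one_inter_cons_cons_subset_image {v : List α} (hne : u ≠ v) :
    iBall 1 (c :: u) ∩ iBall 1 (c :: v) ⊆ (c :: ·) '' (iBall 1 u ∩ iBall 1 v) := by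
  rintro w ⟨hu, hv⟩
  obtain ⟨e, w, rfl⟩ := List.exists_cons_of_length_pos (by rw [hu.2]; omega)
  by_cases hec : e = c
  · subst hec
    exact ⟨w, ⟨cons_mem_iBall_cons_iff.mp hu, cons_mem_iBall_cons_iff.mp hv⟩, rfl⟩
  · exact absurd (List.cons_eq_cons.mp ((eq_of_cons_mem_iBall_one_cons hu hec).symm.trans
      (eq_of_cons_mem_iBall_one_cons hv hec))).2 hne

theorem iBall_one_inter_cons_cons_subset_pair {d : α} {v : List α} (hcd : c ≠ d) :
    iBall 1 (c :: u) ∩ iBall 1 (d :: v) ⊆ {c :: d :: v, d :: c :: u} := by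
  rintro w ⟨hu, hv⟩
  obtain ⟨e, w, rfl⟩ := List.exists_cons_of_length_pos (by rw [hu.2]; omega)
  by_cases hec : e = c
  · subst hec
    exact .inl (congrArg _ (eq_of_cons_mem_iBall_one_cons hv hcd))
  by_cases hed : e = d
  · subst hed
    exact .inr (congrArg _ (eq_of_cons_mem_iBall_one_cons hu hcd.symm))
  · exact absurd (List.cons_eq_cons.mp ((eq_of_cons_mem_iBall_one_cons hu hec).symm.trans
      (eq_of_cons_mem_iBall_one_cons hv hed))).1 hcd

theorem encard_iBall_one_inter_le_two : ∀ {u v : List α}, u ≠ v →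
    (iBall 1 u ∩ iBall 1 v).encard ≤ 2
  | [], [], hne => absurd rfl hne
  | [], _ :: _, _ | _ :: _, [], _ => by simp [iBall_inter_iBall_eq_empty_of_length_ne]
  | c :: u, d :: v, hne => by
    by_cases hcd : c = d
    · subst hcd
      have huv : u ≠ v := fun h => hne (h ▸ rfl)
      calc _ ≤ _ := Set.encard_le_encard (iBall_one_inter_cons_cons_subset_image huv)
        _ ≤ _ := Set.encard_image_le _ _
        _ ≤ 2 := encard_iBall_one_inter_le_two huv
    · exact (Set.encard_le_encard (iBall_one_inter_cons_cons_subset_pair hcd)).trans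
        (Set.encard_pair_le _ _)

end iBall

theorem exists_eq_cons_append_singleton {α : Type*} {z : List α} (h : 2 ≤ z.length) :
    ∃ e w f, z = e :: w ++ [f] := by
  obtain ⟨e, z', rfl⟩ := List.exists_cons_of_length_pos (by omega : 0 < z.length)
  obtain rfl | ⟨w, f, rfl⟩ := List.eq_nil_or_concat' z'
  · simp at h
  · exact ⟨e, w, f, rfl⟩

section

variable {α : Type*} {a a' b b' : α} {r s : List α}

theorem iBall_two_inter_subset (ha : a ≠ a') (hb : b ≠ b')
    (hdist : iBall 1 (a :: r ++ [b]) ∩ iBall 1 (a' :: s ++ [b']) = ∅) :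
    iBall 2 (a :: r ++ [b]) ∩ iBall 2 (a' :: s ++ [b']) ⊆
      {a :: (a' :: s ++ [b']) ++ [b], a' :: (a :: r ++ [b]) ++ [b']} ∪
      ((fun w => a :: w ++ [b']) '' (iBall 1 (r ++ [b]) ∩ iBall 1 (a' :: s)) ∪
        (fun w => a' :: w ++ [b]) '' (iBall 1 (a :: r) ∩ iBall 1 (s ++ [b']))) := by
  rintro z ⟨hx, hy⟩
  obtain ⟨e, w, f, rfl⟩ := exists_eq_cons_append_singleton (z := z) (by rw [hx.2]; omega)
  have he : e = a ∨ e = a' := by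
    by_contra! hne
    exact Set.eq_empty_iff_forall_notMem.mp hdist _
      ⟨mem_iBall_of_cons_mem_iBall_succ_cons hx hne.1,
        mem_iBall_of_cons_mem_iBall_succ_cons hy hne.2⟩
  have hf : f = b ∨ f = b' := by
    by_contra! hne
    exact Set.eq_empty_iff_forall_notMem.mp hdist _
      ⟨mem_iBall_of_append_singleton_mem_iBall_succ hx hne.1,
        mem_iBall_of_append_singleton_mem_iBall_succ hy hne.2⟩
  rcases he with he | he <;> rcases hf with hf | hf <;> subst e f
  · obtain rfl : w = a' :: s ++ [b'] := by
      simpa [iBall_zero] using mem_iBall_of_append_singleton_mem_iBall_succ (u := a' :: s)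
        (mem_iBall_of_cons_mem_iBall_succ_cons hy ha) hb
    exact .inl (Set.mem_insert _ _)
  · exact .inr (.inl ⟨w, ⟨mem_iBall_of_append_singleton_mem_iBall_succ
      (cons_mem_iBall_cons_iff.mp hx) hb.symm, mem_iBall_of_cons_mem_iBall_succ_cons
      (append_singleton_mem_iBall_append_singleton_iff.mp hy) ha⟩, rfl⟩)
  · exact .inr (.inr ⟨w, ⟨mem_iBall_of_cons_mem_iBall_succ_cons
      (append_singleton_mem_iBall_append_singleton_iff.mp hx) ha.symm,
      mem_iBall_of_append_singleton_mem_iBall_succ (cons_mem_iBall_cons_iff.mp hy) hb⟩, rfl⟩)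
  · obtain rfl : w = a :: r ++ [b] := by
      simpa [iBall_zero] using mem_iBall_of_append_singleton_mem_iBall_succ (u := a :: r)
        (mem_iBall_of_cons_mem_iBall_succ_cons hx ha.symm) hb.symm
    exact .inl (Set.mem_insert_of_mem _ rfl)

end

theorem stmt_10_general (q : ℕ) (a a' b b' : Fin q) (r s : List (Fin q))
    (ha : a ≠ a') (hb : b ≠ b')
    (x y : List (Fin q))
    (hx : x = a :: r ++ [b]) (hy : y = a' :: s ++ [b'])
    (hdist : iBall 1 x ∩ iBall 1 y = ∅) :
    (iBall 2 x ∩ iBall 2 y).ncard ≤ 6 := by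
  subst hx hy
  have hr : r ++ [b] ≠ a' :: s := ne_of_iBall_one_inter_eq_empty hdist
  have hs : a :: r ≠ s ++ [b'] :=
    (ne_of_iBall_one_inter_eq_empty (Set.inter_comm .. ▸ hdist)).symm
  have h6 : (iBall 2 (a :: r ++ [b]) ∩ iBall 2 (a' :: s ++ [b'])).encard ≤ 6 := calc
    _ ≤ _ := Set.encard_le_encard (iBall_two_inter_subset ha hb hdist)
    _ ≤ 2 + (2 + 2) := by
      grw [Set.encard_union_le, Set.encard_union_le, Set.encard_image_le, Set.encard_image_le,
        encard_iBall_one_inter_le_two hr, encard_iBall_one_inter_le_two hs, Set.encard_pair_le]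
    _ = 6 := by norm_num
  exact (Set.encard_le_coe_iff_finite_ncard_le.mp h6).2

theorem stmt_10 (q m : ℕ) (hm : 2 ≤ m) (a a' b b' : Fin q) (r s : List (Fin q))
    (ha : a ≠ a') (hb : b ≠ b')
    (x y : List (Fin q))
    (hx : x = a :: r ++ [b]) (hy : y = a' :: s ++ [b'])
    (hxm : x.length = m) (hym : y.length = m) (hxy : x ≠ y)
    (hdist : iBall 1 x ∩ iBall 1 y = ∅) :
    (iBall 2 x ∩ iBall 2 y).ncard ≤ 6 :=
  stmt_10_general q a a' b b' r s ha hb x y hx hy hdist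
end

section
/- Let x, y be sequences of the same length over a q-ary alphabet with d_L(x,y) ≥ 4, and write x = a r b, y = a' s b' where a ≠ a' and b ≠ b'. Then for any symbol a'' not in {a, a'}, no element of I_2(x) ∩ I_2(y) begins with a''; symmetrically, for any b'' not in {b, b'}, no element of I_2(x) ∩ I_2(y) ends with b''. -/
/-!
A common supersequence `e :: z` of `x` and `y` obtained by `t + 1` insertions, whose first symbol
`e` starts neither `x` nor `y`, must embed both `x` and `y` into `z`; so `z` is a common
supersequence obtained by `t` insertions. For `t = 1` this contradicts `d_L(x, y) ≥ 4`. The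
statement about last symbols is the same argument applied to the reversed sequences.
-/

namespace iBall

variable {α : Type*} {t : ℕ} {x y z : List α} {e : α}

theorem mem_of_cons_mem (hz : e :: z ∈ iBall (t + 1) x) (he : x.head? ≠ some e) :
    z ∈ iBall t x := by
  obtain ⟨hsub, hlen⟩ := hz
  refine ⟨?_, by simp only [List.length_cons] at hlen; omega⟩
  cases x with
  | nil => exact List.nil_sublist z
  | cons c l => exact hsub.of_cons_of_ne (by simpa using he)

theorem mem_reverse_iff : z ∈ iBall t x.reverse ↔ z.reverse ∈ iBall t x := by
  simp [iBall, ← List.reverse_sublist (l₁ := x.reverse)]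

theorem reverse_preimage : List.reverse ⁻¹' iBall t x = iBall t x.reverse :=
  Set.ext fun _ => mem_reverse_iff.symm

theorem head?_ne_of_disjoint (hdisj : Disjoint (iBall t x) (iBall t y))
    (hz : z ∈ iBall (t + 1) x ∩ iBall (t + 1) y)
    (hx : x.head? ≠ some e) (hy : y.head? ≠ some e) : z.head? ≠ some e := by
  intro hze
  obtain ⟨z', rfl⟩ : ∃ z', z = e :: z' := List.head?_eq_some_iff.mp hze
  exact hdisj.ne_of_mem (mem_of_cons_mem hz.1 hx) (mem_of_cons_mem hz.2 hy) rfl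

theorem getLast?_ne_of_disjoint (hdisj : Disjoint (iBall t x) (iBall t y))
    (hz : z ∈ iBall (t + 1) x ∩ iBall (t + 1) y)
    (hx : x.getLast? ≠ some e) (hy : y.getLast? ≠ some e) : z.getLast? ≠ some e := by
  have hdisj_rev : Disjoint (iBall t x.reverse) (iBall t y.reverse) := by
    simpa only [← reverse_preimage] using hdisj.preimage List.reverse
  rw [← List.head?_reverse] at hx hy ⊢
  exact head?_ne_of_disjoint hdisj_rev
    ⟨mem_reverse_iff.mpr (by simpa using hz.1), mem_reverse_iff.mpr (by simpa using hz.2)⟩ hx hy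

end iBall

theorem stmt_11_general (q : ℕ) (a a' b b' : Fin q) (r s : List (Fin q))
    (x y : List (Fin q))
    (hx : x = a :: r ++ [b]) (hy : y = a' :: s ++ [b'])
    (hdist : iBall 1 x ∩ iBall 1 y = ∅) :
    ∀ z ∈ iBall 2 x ∩ iBall 2 y,
      (∀ a'' : Fin q, a'' ≠ a → a'' ≠ a' → z.head? ≠ some a'') ∧
      (∀ b'' : Fin q, b'' ≠ b → b'' ≠ b' → z.getLast? ≠ some b'') := by
  subst hx hy
  have hdisj := Set.disjoint_iff_inter_eq_empty.mpr hdist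
  refine fun z hz => ⟨fun a'' h h' => ?_, fun b'' h h' => ?_⟩
  · exact iBall.head?_ne_of_disjoint hdisj hz (by simpa using h.symm) (by simpa using h'.symm)
  · exact iBall.getLast?_ne_of_disjoint hdisj hz
      (by simpa [List.getLast?_cons] using h.symm) (by simpa [List.getLast?_cons] using h'.symm)

theorem stmt_11 (q n : ℕ) (a a' b b' : Fin q) (r s : List (Fin q))
    (ha : a ≠ a') (hb : b ≠ b')
    (x y : List (Fin q))
    (hx : x = a :: r ++ [b]) (hy : y = a' :: s ++ [b'])
    (hxn : x.length = n) (hyn : y.length = n)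
    (hdist : iBall 1 x ∩ iBall 1 y = ∅) :
    ∀ z ∈ iBall 2 x ∩ iBall 2 y,
      (∀ a'' : Fin q, a'' ≠ a → a'' ≠ a' → z.head? ≠ some a'') ∧
      (∀ b'' : Fin q, b'' ≠ b → b'' ≠ b' → z.getLast? ≠ some b'') :=
  stmt_11_general q a a' b b' r s x y hx hy hdist
end

section
/- Every q-ary code C ⊆ Σ_q^n that can uniquely reconstruct codewords from any N distinct elements of the t-insertion ball also has this property for the t-deletion ball: if for all distinct x, y ∈ C we have |I_t(x) ∩ I_t(y)| < N, then for all distinct x, y ∈ C we have |D_t(x) ∩ D_t(y)| < N. -/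
/-!
If `z` is a common subsequence of `x` and `y`, merging `x` and `y` along the leftmost occurrences
of the letters of `z` gives a common supersequence of length `|x| + |y| - |z|`. Comparing the two
merges letter by letter from the left shows that `z` can be read back from the merge, so
`z ↦ mergeAlong x y z` injects `D_t(x) ∩ D_t(y)` into `I_t(x) ∩ I_t(y)` whenever `|x| = |y|`.
-/

namespace List

variable {α : Type*}

theorem append_cons_inj_of_notMem_left {x₁ x₂ z₁ z₂ : List α} {a : α} (h₁ : a ∉ x₁)
    (h₂ : a ∉ x₂) (h : x₁ ++ a :: z₁ = x₂ ++ a :: z₂) : x₁ = x₂ ∧ z₁ = z₂ := by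
  induction x₁ generalizing x₂ with
  | nil =>
    cases x₂ with
    | nil => simpa using h
    | cons b x₂ =>
      obtain ⟨rfl, -⟩ := cons.inj h
      simp at h₂
  | cons b x₁ ih =>
    cases x₂ with
    | nil =>
      obtain ⟨rfl, -⟩ := cons.inj h
      simp at h₁
    | cons c x₂ =>
      simp only [cons_append, cons.injEq, mem_cons, not_or] at h h₁ h₂
      obtain ⟨rfl, h⟩ := h
      exact (ih h₁.2 h₂.2 h).imp_left (congrArg _)

theorem Sublist.of_cons_of_head?_ne {z x : List α} {a : α} (h : z <+ a :: x)
    (ha : z.head? ≠ some a) : z <+ x := by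
  rcases sublist_cons_iff.1 h with h | ⟨r, rfl, _⟩
  · exact h
  · simp at ha

variable [DecidableEq α]

def prefixBefore (c : α) (y : List α) : List α := y.takeWhile (· ≠ c)

def suffixAfter (c : α) (y : List α) : List α := (y.dropWhile (· ≠ c)).tail

theorem notMem_prefixBefore (c : α) (y : List α) : c ∉ prefixBefore c y := fun h => by
  simpa using mem_takeWhile_imp h

theorem prefixBefore_append_cons_suffixAfter {c : α} {y : List α} (h : c ∈ y) :
    prefixBefore c y ++ c :: suffixAfter c y = y := by
  induction y with
  | nil => simp at h
  | cons b y ih =>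
    by_cases hb : b = c
    · subst hb; simp [prefixBefore, suffixAfter]
    · have hy : c ∈ y := (mem_cons.1 h).resolve_left (Ne.symm hb)
      simpa [prefixBefore, suffixAfter, takeWhile_cons, dropWhile_cons, hb] using ih hy

theorem prefixBefore_append {c : α} {u : List α} (h : c ∉ u) (y : List α) :
    prefixBefore c (u ++ y) = u ++ prefixBefore c y :=
  takeWhile_append_of_pos fun a ha => by simpa using ne_of_mem_of_not_mem ha h

theorem suffixAfter_append {c : α} {u : List α} (h : c ∉ u) (y : List α) :
    suffixAfter c (u ++ y) = suffixAfter c y := by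
  rw [suffixAfter, dropWhile_append_of_pos fun a ha => by simpa using ne_of_mem_of_not_mem ha h]
  rfl

theorem Sublist.sublist_suffixAfter {c : α} {z y : List α} (h : c :: z <+ y) :
    z <+ suffixAfter c y := by
  rw [← prefixBefore_append_cons_suffixAfter (h.subset mem_cons_self)] at h
  obtain ⟨l₁, l₂, hl, h₁, h₂⟩ := sublist_append_iff.1 h
  cases l₁ with
  | nil =>
    rw [nil_append] at hl
    exact cons_sublist_cons.1 (hl ▸ h₂)
  | cons b l₁ =>
    obtain ⟨rfl, -⟩ := cons.inj hl
    exact absurd (h₁.subset mem_cons_self) (notMem_prefixBefore c y)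

def mergeAlong : List α → List α → List α → List α
  | x, y, [] => x ++ y
  | [], y, _ :: _ => y
  | a :: x, y, c :: z =>
    if a = c then prefixBefore c y ++ c :: mergeAlong x (suffixAfter c y) z
    else a :: mergeAlong x y (c :: z)

theorem mergeAlong_cons_self (a : α) (x y z : List α) :
    mergeAlong (a :: x) y (a :: z) = prefixBefore a y ++ a :: mergeAlong x (suffixAfter a y) z := by
  simp [mergeAlong]

theorem mergeAlong_cons_of_head?_ne {a : α} {z : List α} (ha : z.head? ≠ some a) (x y : List α) :
    mergeAlong (a :: x) y z = a :: mergeAlong x y z := by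
  cases z with
  | nil => simp [mergeAlong]
  | cons c z =>
    have hca : a ≠ c := fun h => ha (by simp [h])
    simp [mergeAlong, hca]

theorem length_mergeAlong {x y z : List α} (hx : z <+ x) (hy : z <+ y) :
    (mergeAlong x y z).length + z.length = x.length + y.length := by
  induction x generalizing y z with
  | nil => simp [sublist_nil.1 hx, mergeAlong]
  | cons a x ih =>
    by_cases ha : z.head? = some a
    · obtain ⟨z, rfl⟩ := head?_eq_some_iff.1 ha
      have hsplit := congrArg length (prefixBefore_append_cons_suffixAfter (hy.subset mem_cons_self))
      have := ih (cons_sublist_cons.1 hx) hy.sublist_suffixAfter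
      simp only [length_append, length_cons] at hsplit this ⊢
      rw [mergeAlong_cons_self]
      simp only [length_append, length_cons]
      omega
    · have := ih (hx.of_cons_of_head?_ne ha) hy
      rw [mergeAlong_cons_of_head?_ne ha, length_cons, length_cons]
      omega

theorem sublist_mergeAlong {x y z : List α} (hx : z <+ x) (hy : z <+ y) :
    x <+ mergeAlong x y z ∧ y <+ mergeAlong x y z := by
  induction x generalizing y z with
  | nil => simp [sublist_nil.1 hx, mergeAlong]
  | cons a x ih =>
    by_cases ha : z.head? = some a
    · obtain ⟨z, rfl⟩ := head?_eq_some_iff.1 ha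
      obtain ⟨ihx, ihy⟩ := ih (cons_sublist_cons.1 hx) hy.sublist_suffixAfter
      rw [mergeAlong_cons_self]
      refine ⟨(ihx.cons_cons a).trans (sublist_append_right _ _), ?_⟩
      conv_lhs => rw [← prefixBefore_append_cons_suffixAfter (hy.subset mem_cons_self)]
      exact (ihy.cons_cons a).append_left _
    · obtain ⟨ihx, ihy⟩ := ih (hx.of_cons_of_head?_ne ha) hy
      rw [mergeAlong_cons_of_head?_ne ha]
      exact ⟨ihx.cons_cons a, ihy.cons a⟩

theorem eq_cons_of_mergeAlong_cons_self_eq_cons {a : α} {x y z w : List α} (hy : a :: z <+ y)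
    (h : mergeAlong (a :: x) y (a :: z) = a :: w) :
    y = a :: suffixAfter a y ∧ mergeAlong x (suffixAfter a y) z = w := by
  rw [mergeAlong_cons_self, ← nil_append (a :: w)] at h
  obtain ⟨hpre, hrest⟩ := append_cons_inj_of_notMem_left (notMem_prefixBefore a y) not_mem_nil h
  refine ⟨?_, hrest⟩
  simpa [hpre] using (prefixBefore_append_cons_suffixAfter (hy.subset mem_cons_self)).symm

/-- `u` collects letters of `y` that the merge along `z₁` has already matched with letters of `x`
while the merge along `z₂` has yet to place them. -/
theorem eq_nil_and_eq_of_mergeAlong_eq_mergeAlong_append {x y u z₁ z₂ : List α}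
    (h₁x : z₁ <+ x) (h₁y : z₁ <+ y) (h₂x : z₂ <+ x) (h₂y : z₂ <+ y)
    (hu : ∀ d ∈ z₂.head?, d ∉ u) (h : mergeAlong x y z₁ = mergeAlong x (u ++ y) z₂) :
    u = [] ∧ z₁ = z₂ := by
  induction x generalizing y u z₁ z₂ with
  | nil =>
    obtain rfl := sublist_nil.1 h₁x
    obtain rfl := sublist_nil.1 h₂x
    simp only [mergeAlong, nil_append] at h
    exact ⟨self_eq_append_left.1 h, rfl⟩
  | cons a x ih =>
    by_cases h₁ : z₁.head? = some a <;> by_cases h₂ : z₂.head? = some a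
    · obtain ⟨z₁, rfl⟩ := head?_eq_some_iff.1 h₁
      obtain ⟨z₂, rfl⟩ := head?_eq_some_iff.1 h₂
      have hau : a ∉ u := hu a rfl
      rw [mergeAlong_cons_self, mergeAlong_cons_self, prefixBefore_append hau,
        suffixAfter_append hau] at h
      obtain ⟨hpre, hrest⟩ := append_cons_inj_of_notMem_left (notMem_prefixBefore a y)
        (by simp [hau, notMem_prefixBefore]) h
      obtain rfl : u = [] := self_eq_append_left.1 hpre
      obtain ⟨-, rfl⟩ := ih (u := []) (cons_sublist_cons.1 h₁x) h₁y.sublist_suffixAfter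
        (cons_sublist_cons.1 h₂x) h₂y.sublist_suffixAfter (by simp) hrest
      exact ⟨rfl, rfl⟩
    · obtain ⟨z₁, rfl⟩ := head?_eq_some_iff.1 h₁
      rw [mergeAlong_cons_of_head?_ne h₂] at h
      obtain ⟨hy, hrest⟩ := eq_cons_of_mergeAlong_cons_self_eq_cons h₁y h
      generalize suffixAfter a y = s at hy hrest
      subst hy
      rw [show u ++ a :: s = (u ++ [a]) ++ s by simp] at hrest
      have hdu : ∀ d ∈ z₂.head?, d ∉ u ++ [a] := fun d hd hdu =>
        (mem_append.1 hdu).elim (hu d hd) fun hda => h₂ (mem_singleton.1 hda ▸ hd)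
      simpa using (ih (cons_sublist_cons.1 h₁x) (cons_sublist_cons.1 h₁y)
        (h₂x.of_cons_of_head?_ne h₂) (h₂y.of_cons_of_head?_ne h₂) hdu hrest).1
    · obtain ⟨z₂, rfl⟩ := head?_eq_some_iff.1 h₂
      rw [mergeAlong_cons_of_head?_ne h₁] at h
      obtain ⟨huy, hrest⟩ :=
        eq_cons_of_mergeAlong_cons_self_eq_cons (h₂y.trans (sublist_append_right u y)) h.symm
      obtain rfl : u = [] := by
        rcases u with _ | ⟨b, u⟩
        · rfl
        · exact absurd ((cons.inj huy).1 ▸ mem_cons_self) (hu a rfl)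
      generalize suffixAfter a ([] ++ y) = s at huy hrest
      rw [nil_append] at huy
      subst huy
      have hda : ∀ d ∈ z₁.head?, d ∉ [a] := fun d hd hda => h₁ (mem_singleton.1 hda ▸ hd)
      exact absurd (ih (cons_sublist_cons.1 h₂x) (cons_sublist_cons.1 h₂y)
        (h₁x.of_cons_of_head?_ne h₁) (h₁y.of_cons_of_head?_ne h₁) hda hrest).1 (cons_ne_nil a [])
    · rw [mergeAlong_cons_of_head?_ne h₁, mergeAlong_cons_of_head?_ne h₂, cons.injEq] at h
      exact ih (h₁x.of_cons_of_head?_ne h₁) h₁y (h₂x.of_cons_of_head?_ne h₂) h₂y hu h.2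

theorem mergeAlong_injOn (x y : List α) :
    {z | z <+ x ∧ z <+ y}.InjOn (mergeAlong x y) := fun _ ⟨h₁x, h₁y⟩ _ ⟨h₂x, h₂y⟩ h =>
  (eq_nil_and_eq_of_mergeAlong_eq_mergeAlong_append (u := []) h₁x h₁y h₂x h₂y (by simp) h).2

end List

theorem ncard_dBall_inter_le_ncard_iBall_inter {α : Type*} [Finite α] (t : ℕ) {x y : List α}
    (hxy : x.length = y.length) :
    (dBall t x ∩ dBall t y).ncard ≤ (iBall t x ∩ iBall t y).ncard := by
  classical
  refine Set.ncard_le_ncard_of_injOn (List.mergeAlong x y) ?_ ?_ ?_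
  · rintro z ⟨⟨hzx, hx⟩, hzy, hy⟩
    have hlen := List.length_mergeAlong hzx hzy
    obtain ⟨hxw, hyw⟩ := List.sublist_mergeAlong hzx hzy
    exact ⟨⟨hxw, by omega⟩, hyw, by omega⟩
  · refine (List.mergeAlong_injOn x y).mono ?_
    rintro z ⟨⟨hzx, -⟩, hzy, -⟩
    exact ⟨hzx, hzy⟩
  · exact (List.finite_length_eq α (x.length + t)).subset fun w hw => hw.1.2

theorem stmt_12 (q n t N : ℕ) (C : Set (List (Fin q)))
    (hlen : ∀ x ∈ C, x.length = n)
    (hI : ∀ x ∈ C, ∀ y ∈ C, x ≠ y → (iBall t x ∩ iBall t y).ncard < N) :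
    ∀ x ∈ C, ∀ y ∈ C, x ≠ y → (dBall t x ∩ dBall t y).ncard < N := by
  intro x hx y hy hxy
  calc (dBall t x ∩ dBall t y).ncard
      ≤ (iBall t x ∩ iBall t y).ncard :=
        ncard_dBall_inter_le_ncard_iBall_inter t ((hlen x hx).trans (hlen y hy).symm)
    _ < N := hI x hx y hy hxy
end

section
/- Let q ≥ 2 and n ≥ 1, and set r = ⌊(q−1)(n−1)/q⌋ + 1. Then the number of sequences in Σ_q^n having at most r runs equals q·Σ_{i=0}^{r−1} C(n−1, i)·(q−1)^i, and this quantity is at least q^{n−1}. -/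
/-!
A word of length `m + 1` over a finite additive group `G` is determined by its first letter and
its vector of adjacent differences in `G ^ m`, and its number of runs exceeds the Hamming weight
of that vector by one. Hence the words with at most `t + 1` runs number `|G|` times the volume
of the Hamming ball of radius `t` in `G ^ m`, i.e. `|G| * ∑_{i ≤ t} C(m, i) (|G| - 1) ^ i`.

For the lower bound, the Hamming distances from a word to the `q` constant words sum to
`m (q - 1)`, so every word lies within `⌊(q - 1) m / q⌋` of a constant word: the `q` balls of
that radius around the constant words cover all `q ^ m` words.
-/

open Finset Fintype

section HammingBall

variable {ι β : Type*} [Fintype ι] [Fintype β] [DecidableEq β]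

theorem card_filter_filter_ne_eq [DecidableEq ι] (c : ι → β) (s : Finset ι) :
    #{d : ι → β | ({j | d j ≠ c j} : Finset ι) = s} = (card β - 1) ^ #s := by
  have hfilter : ({d : ι → β | ({j | d j ≠ c j} : Finset ι) = s} : Finset _) =
      piFinset fun j => if j ∈ s then ({x | x ≠ c j} : Finset β) else {c j} := by
    ext d
    simp only [mem_filter, mem_univ, true_and, mem_piFinset, Finset.ext_iff]
    refine forall_congr' fun j => ?_
    split_ifs with hj <;> simp [hj]
  rw [hfilter, card_piFinset]
  simp_rw [apply_ite card, filter_ne', card_erase_of_mem (mem_univ _), card_univ, card_singleton]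
  rw [Finset.prod_ite_mem, univ_inter, prod_const]

theorem card_filter_hammingDist_eq [DecidableEq ι] (c : ι → β) (i : ℕ) :
    #{d : ι → β | hammingDist d c = i} = (card ι).choose i * (card β - 1) ^ i := by
  have hmaps : ∀ d ∈ ({d : ι → β | hammingDist d c = i} : Finset _),
      ({j | d j ≠ c j} : Finset ι) ∈ powersetCard i univ :=
    fun d hd => mem_powersetCard.mpr ⟨subset_univ _, (mem_filter.mp hd).2⟩
  rw [card_eq_sum_card_fiberwise hmaps]
  have hfiber : ∀ s ∈ powersetCard i (univ : Finset ι),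
      #{d ∈ ({d : ι → β | hammingDist d c = i} : Finset _) |
        ({j | d j ≠ c j} : Finset ι) = s} = (card β - 1) ^ i := by
    intro s hs
    rw [mem_powersetCard] at hs
    rw [← hs.2, ← card_filter_filter_ne_eq c s, filter_filter]
    exact congrArg card <| filter_congr fun d _ =>
      ⟨And.right, fun h => ⟨by rw [hammingDist, h, hs.2], h⟩⟩
  rw [sum_congr rfl hfiber, sum_const, card_powersetCard, card_univ, smul_eq_mul]

theorem card_filter_hammingDist_le [DecidableEq ι] (c : ι → β) (t : ℕ) :
    #{d : ι → β | hammingDist d c ≤ t} =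
      ∑ i ∈ range (t + 1), (card ι).choose i * (card β - 1) ^ i := by
  rw [card_eq_sum_card_fiberwise (f := fun d => hammingDist d c) (t := range (t + 1))
    fun d hd => mem_range_succ_iff.mpr (mem_filter.mp hd).2]
  refine sum_congr rfl fun i hi => ?_
  rw [← card_filter_hammingDist_eq c i, filter_filter]
  exact congrArg card <| filter_congr fun d _ =>
    ⟨And.right, fun h => ⟨(h ▸ mem_range_succ_iff.mp hi :), h⟩⟩

theorem sum_hammingDist_const (d : ι → β) :
    ∑ b, hammingDist d (fun _ => b) = card ι * (card β - 1) := by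
  simp_rw [hammingDist, card_filter]
  rw [sum_comm]
  simp_rw [← card_filter, filter_ne univ, card_erase_of_mem (mem_univ _), card_univ, sum_const,
    card_univ, smul_eq_mul]

theorem exists_hammingDist_const_le [Nonempty β] (d : ι → β) :
    ∃ b, hammingDist d (fun _ => b) ≤ card ι * (card β - 1) / card β := by
  have hsum : ∑ b, card β * hammingDist d (fun _ => b) ≤ ∑ _b : β, card ι * (card β - 1) := by
    rw [← mul_sum, sum_hammingDist_const, sum_const, card_univ, smul_eq_mul]
  obtain ⟨b, -, hb⟩ := exists_le_of_sum_le univ_nonempty hsum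
  exact ⟨b, (Nat.le_div_iff_mul_le card_pos).mpr (by rw [mul_comm]; exact hb)⟩

theorem card_fun_le_card_mul_sum_choose [DecidableEq ι] [Nonempty β] :
    card β ^ card ι ≤ card β *
      ∑ i ∈ range (card ι * (card β - 1) / card β + 1), (card ι).choose i * (card β - 1) ^ i := by
  set t := card ι * (card β - 1) / card β
  have hcover : (univ : Finset (ι → β)) ⊆
      univ.biUnion fun b => {d | hammingDist d (fun _ => b) ≤ t} :=
    fun d _ => by simpa using exists_hammingDist_const_le d
  calc card β ^ card ι = #(univ : Finset (ι → β)) := by rw [card_univ, card_fun]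
    _ ≤ ∑ b, #{d : ι → β | hammingDist d (fun _ => b) ≤ t} :=
      (card_le_card hcover).trans card_biUnion_le
    _ = _ := by simp_rw [card_filter_hammingDist_le, sum_const, card_univ, smul_eq_mul]

end HammingBall

section Runs

variable {α : Type*} [DecidableEq α]

theorem nRuns_cons_cons (a b : α) (l : List α) :
    nRuns (a :: b :: l) = nRuns (b :: l) + if a = b then 0 else 1 := by
  by_cases h : a = b
  · subst h
    simp [nRuns, List.destutter_cons']
  · simp [nRuns, List.destutter_cons', h]

theorem nRuns_ofFn {m : ℕ} (v : Fin (m + 1) → α) :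
    nRuns (List.ofFn v) = hammingDist (Fin.init v) (Fin.tail v) + 1 := by
  induction m with
  | zero => simp [nRuns, Subsingleton.elim (Fin.init v) (Fin.tail v)]
  | succ m ih =>
    have htail : List.ofFn (Fin.tail v) = v 1 :: List.ofFn (Fin.tail (Fin.tail v)) :=
      List.ofFn_succ
    rw [List.ofFn_succ, show (List.ofFn fun i => v i.succ) = List.ofFn (Fin.tail v) from rfl,
      htail, nRuns_cons_cons, ← htail, ih]
    simp only [hammingDist, card_filter, Fin.sum_univ_succ]
    set rest := ∑ i : Fin m, if Fin.init (Fin.tail v) i ≠ Fin.tail (Fin.tail v) i then 1 else 0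
    change rest + 1 + (if v 0 = v 1 then 0 else 1) = ((if v 0 ≠ v 1 then 1 else 0) + rest) + 1
    by_cases h : v 0 = v 1 <;> simp [h, add_comm]

end Runs

theorem ncard_setOf_length_eq_card_filter_ofFn {α : Type*} [Fintype α] (n : ℕ)
    (P : List α → Prop) [DecidablePred P] :
    {x : List α | x.length = n ∧ P x}.ncard = #{v : Fin n → α | P (List.ofFn v)} := by
  have himage : {x : List α | x.length = n ∧ P x} =
      List.ofFn '' (({v | P (List.ofFn v)} : Finset (Fin n → α)) : Set (Fin n → α)) := by
    ext x
    simp only [Set.mem_ofPred_eq, coe_filter, mem_univ, true_and, Set.mem_image]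
    constructor
    · rintro ⟨rfl, hx⟩
      exact ⟨fun i : Fin x.length => x[(i : ℕ)], by rwa [List.ofFn_getElem], List.ofFn_getElem⟩
    · rintro ⟨v, hv, rfl⟩
      exact ⟨List.length_ofFn, hv⟩
  rw [himage, Set.ncard_image_of_injective _ List.ofFn_injective, Set.ncard_coe_finset]

section AdjacentDifferences

variable {G : Type*} [AddGroup G] {m : ℕ}

def adjDiff (v : Fin (m + 1) → G) : Fin m → G := fun j => -v j.castSucc + v j.succ

theorem hammingDist_init_tail [DecidableEq G] (v : Fin (m + 1) → G) :
    hammingDist (Fin.init v) (Fin.tail v) = hammingNorm (adjDiff v) :=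
  hammingDist_eq_hammingNorm _ _

theorem adjDiff_vadd_partialSum (a : G) (d : Fin m → G) :
    adjDiff (a +ᵥ Fin.partialSum d) = d := by
  funext j
  simp only [adjDiff, Pi.vadd_apply, vadd_eq_add, neg_add_rev, add_assoc, neg_add_cancel_left,
    Fin.partialSum_right_neg]

@[simps]
def partialSumEquiv : G × (Fin m → G) ≃ (Fin (m + 1) → G) where
  toFun p := p.1 +ᵥ Fin.partialSum p.2
  invFun v := (v 0, adjDiff v)
  left_inv p := by simp [adjDiff_vadd_partialSum]
  right_inv v := Fin.partialSum_left_neg v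

theorem card_filter_adjDiff [Fintype G] [DecidableEq G] (P : (Fin m → G) → Prop)
    [DecidablePred P] : #{v : Fin (m + 1) → G | P (adjDiff v)} = card G * #{d | P d} := by
  rw [← card_univ, ← card_product]
  exact card_equiv partialSumEquiv.symm fun v => by simp

theorem card_filter_nRuns_ofFn_le [Fintype G] [DecidableEq G] (t : ℕ) :
    #{v : Fin (m + 1) → G | nRuns (List.ofFn v) ≤ t + 1} =
      card G * ∑ i ∈ range (t + 1), m.choose i * (card G - 1) ^ i := by
  calc #{v : Fin (m + 1) → G | nRuns (List.ofFn v) ≤ t + 1}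
      = #{v : Fin (m + 1) → G | hammingDist (adjDiff v) 0 ≤ t} :=
        congrArg card <| filter_congr fun v _ => by
          rw [nRuns_ofFn, hammingDist_init_tail, hammingDist_zero_right, Nat.add_le_add_iff_right]
    _ = card G * #{d : Fin m → G | hammingDist d 0 ≤ t} :=
        card_filter_adjDiff (hammingDist · 0 ≤ t)
    _ = _ := by rw [card_filter_hammingDist_le, Fintype.card_fin]

end AdjacentDifferences

theorem stmt_13 (q n : ℕ) (hq : 2 ≤ q) (hn : 1 ≤ n) :
    {x : List (Fin q) | x.length = n ∧ nRuns x ≤ (q - 1) * (n - 1) / q + 1}.ncard =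
      q * ∑ i ∈ Finset.range ((q - 1) * (n - 1) / q + 1),
        Nat.choose (n - 1) i * (q - 1) ^ i ∧
    q ^ (n - 1) ≤
      q * ∑ i ∈ Finset.range ((q - 1) * (n - 1) / q + 1),
        Nat.choose (n - 1) i * (q - 1) ^ i := by
  obtain ⟨m, rfl⟩ : ∃ m, n = m + 1 := ⟨n - 1, by omega⟩
  have : NeZero q := ⟨by omega⟩
  rw [Nat.add_sub_cancel, ncard_setOf_length_eq_card_filter_ofFn, card_filter_nRuns_ofFn_le,
    Fintype.card_fin]
  refine ⟨rfl, ?_⟩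
  simpa [mul_comm] using card_fun_le_card_mul_sum_choose (ι := Fin m) (β := Fin q)
end

section
/- Let x, y be two distinct sequences of length n over Σ_q such that |I_1(x) ∩ I_1(y)| = 1, and write x = u x̃ v, y = u ỹ v with u, v the longest common prefix and suffix. Then either {x̃, ỹ} = {ac, cd} for pairwise distinct symbols a, c, d, or {x̃, ỹ} = {ac w b, c w b d} for symbols a, b, c, d and a (possibly empty) sequence w with a ≠ c, b ≠ d, and ac w ≠ w b d. -/
namespace List

variable {α : Type*}

theorem exists_eq_append_cons_of_sublist_of_length_eq {x z : List α} (h : x <+ z)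
    (hl : z.length = x.length + 1) : ∃ l a r, x = l ++ r ∧ z = l ++ a :: r := by
  induction h with
  | slnil => simp at hl
  | @cons l₁ l₂ a h _ =>
    obtain rfl : l₁ = l₂ := h.eq_of_length (by simpa using hl.symm)
    exact ⟨[], a, l₁, rfl, rfl⟩
  | @cons_cons l₁ l₂ a _ ih =>
    obtain ⟨l, c, r, rfl, rfl⟩ := ih (by simpa using hl)
    exact ⟨a :: l, c, r, rfl, rfl⟩

theorem eq_cons_of_append_eq_cons_append {a : α} {l₁ l₂ : List α} :
    ∀ l : List α, l ++ l₁ = a :: (l ++ l₂) → l₁ = a :: l₂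
  | [], h => h
  | _ :: l, h => by
    simp only [cons_append, cons.injEq] at h
    obtain ⟨rfl, h⟩ := h
    exact eq_cons_of_append_eq_cons_append l h

theorem cons_eq_append_singleton_of_cons_append_eq {p q s t : List α} {a b : α}
    (h : a :: (p ++ s ++ q) = p ++ t ++ q ++ [b]) : a :: s = t ++ [b] := by
  have h₁ : t ++ q ++ [b] = a :: (s ++ q) :=
    eq_cons_of_append_eq_cons_append p (by simpa using h.symm)
  have h₂ : (a :: s).reverse = b :: t.reverse :=
    eq_cons_of_append_eq_cons_append q.reverse (by simpa using congrArg reverse h₁.symm)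
  simpa using congrArg reverse h₂

theorem prefix_of_prefix_append_of_head_ne {l u s t v : List α} (hx : l <+: u ++ s ++ v)
    (hy : l <+: u ++ t ++ v) (hs : s ≠ []) (ht : t ≠ []) (h : s.head hs ≠ t.head ht) :
    l <+: u := by
  rcases prefix_or_prefix_of_prefix hx (show u <+: u ++ s ++ v by
    rw [append_assoc]; exact prefix_append _ _) with hu | ⟨l', rfl⟩
  · exact hu
  obtain ⟨c, s, rfl⟩ := exists_cons_of_ne_nil hs
  obtain ⟨d, t, rfl⟩ := exists_cons_of_ne_nil ht
  rcases l' with _ | ⟨e, l'⟩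
  · simp
  simp only [append_assoc, prefix_append_right_inj, cons_append, cons_prefix_cons] at hx hy
  exact absurd (hx.1.symm.trans hy.1) h

theorem suffix_of_suffix_append_of_getLast_ne {l u s t v : List α} (hx : l <:+ u ++ s ++ v)
    (hy : l <:+ u ++ t ++ v) (hs : s ≠ []) (ht : t ≠ []) (h : s.getLast hs ≠ t.getLast ht) :
    l <:+ v := by
  rw [← reverse_prefix] at hx hy ⊢
  refine prefix_of_prefix_append_of_head_ne (u := v.reverse) (v := u.reverse)
    (by simpa using hx) (by simpa using hy) (by simpa using hs) (by simpa using ht) ?_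
  simpa [head_reverse] using h

theorem exists_eq_append_cons_of_append_cons_eq {l₁ l₂ r₁ r₂ : List α} {a b : α}
    (h : l₁ ++ a :: r₁ = l₂ ++ b :: r₂) (hlt : l₁.length < l₂.length) :
    ∃ e, l₂ = l₁ ++ a :: e ∧ r₁ = e ++ b :: r₂ := by
  rcases append_eq_append_iff.mp h with ⟨_ | ⟨c, e⟩, rfl, he⟩ | ⟨e, rfl, -⟩
  · simp at hlt
  · obtain ⟨rfl, rfl⟩ := cons_eq_cons.mp he
    exact ⟨e, rfl, rfl⟩
  · simp at hlt

end List

section InsertionBall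

variable {α : Type*}

theorem append_append_mem_iBall {s w : List α} (u v : List α) {k : ℕ} (h : s.Sublist w)
    (hl : w.length = s.length + k) : u ++ w ++ v ∈ iBall k (u ++ s ++ v) :=
  ⟨((List.Sublist.refl u).append h).append (List.Sublist.refl v), by simp [hl]; omega⟩

theorem cons_mem_iBall_inter_of_cons_eq_append {s t : List α} {a b : α} (u v : List α)
    (h : a :: s = t ++ [b]) :
    u ++ a :: s ++ v ∈ iBall 1 (u ++ s ++ v) ∩ iBall 1 (u ++ t ++ v) :=
  ⟨append_append_mem_iBall u v (List.sublist_cons_self a s) rfl,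
    append_append_mem_iBall u v (h ▸ List.sublist_append_left t [b]) (by simp [h])⟩

theorem cons_eq_append_of_insert_lt {u v s t l₁ l₂ r₁ r₂ : List α} {a b : α}
    (hs : s ≠ []) (ht : t ≠ []) (hhead : s.head hs ≠ t.head ht)
    (hlast : s.getLast hs ≠ t.getLast ht)
    (hx : u ++ s ++ v = l₁ ++ r₁) (hy : u ++ t ++ v = l₂ ++ r₂)
    (hz : l₁ ++ a :: r₁ = l₂ ++ b :: r₂) (hlt : l₁.length < l₂.length) :
    a :: s = t ++ [b] := by
  obtain ⟨e, rfl, rfl⟩ := List.exists_eq_append_cons_of_append_cons_eq hz hlt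
  obtain ⟨p, rfl⟩ : l₁ <+: u :=
    List.prefix_of_prefix_append_of_head_ne ⟨_, hx.symm⟩ ⟨a :: e ++ r₂, by simp [hy]⟩
      hs ht hhead
  obtain ⟨q, rfl⟩ : r₂ <:+ v :=
    List.suffix_of_suffix_append_of_getLast_ne ⟨l₁ ++ e ++ [b], by rw [hx]; simp⟩
      ⟨_, hy.symm⟩ hs ht hlast
  have hx' : p ++ s ++ q = e ++ [b] := by
    apply List.append_cancel_right (bs := r₂); apply List.append_cancel_left (as := l₁)
    simpa using hx
  have hy' : p ++ t ++ q = a :: e := by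
    apply List.append_cancel_right (bs := r₂); apply List.append_cancel_left (as := l₁)
    simpa using hy
  apply List.cons_eq_append_singleton_of_cons_append_eq (p := p) (q := q)
  rw [hx', hy']
  rfl

theorem cons_eq_append_of_mem_iBall_inter {u v s t z : List α} (hs : s ≠ []) (ht : t ≠ [])
    (hhead : s.head hs ≠ t.head ht) (hlast : s.getLast hs ≠ t.getLast ht)
    (hz : z ∈ iBall 1 (u ++ s ++ v) ∩ iBall 1 (u ++ t ++ v)) :
    (∃ a b, a :: s = t ++ [b]) ∨ ∃ a b, a :: t = s ++ [b] := by
  obtain ⟨⟨hsx, hlx⟩, hsy, hly⟩ := hz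
  obtain ⟨l₁, a, r₁, hx, rfl⟩ := List.exists_eq_append_cons_of_sublist_of_length_eq hsx hlx
  obtain ⟨l₂, b, r₂, hy, hz⟩ := List.exists_eq_append_cons_of_sublist_of_length_eq hsy hly
  rcases lt_trichotomy l₁.length l₂.length with hlt | heq | hgt
  · exact .inl ⟨a, b, cons_eq_append_of_insert_lt hs ht hhead hlast hx hy hz hlt⟩
  · obtain ⟨rfl, -, rfl⟩ : l₁ = l₂ ∧ a = b ∧ r₁ = r₂ := by simpa using List.append_inj hz heq
    obtain rfl : s = t := by simpa [← hy] using hx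
    exact absurd rfl hhead
  · exact .inr ⟨b, a, cons_eq_append_of_insert_lt ht hs hhead.symm hlast.symm hy hx hz.symm hgt⟩

theorem ncard_iBall_inter_ne_one_of_cons_eq_append {u v s t : List α} {a b c d : α}
    (hst : a :: s = t ++ [b]) (hts : c :: t = s ++ [d]) (hne : s ≠ t) :
    (iBall 1 (u ++ s ++ v) ∩ iBall 1 (u ++ t ++ v)).ncard ≠ 1 := by
  intro hcard
  obtain ⟨z, hz⟩ := Set.ncard_eq_one.mp hcard
  have h₁ := cons_mem_iBall_inter_of_cons_eq_append u v hst
  have h₂ := cons_mem_iBall_inter_of_cons_eq_append u v hts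
  rw [Set.inter_comm, hz] at h₂
  rw [hz] at h₁
  have : t ++ [b] = s ++ [d] := by simpa [← hst, ← hts] using h₁.trans h₂.symm
  exact hne (List.append_inj_left' this rfl).symm

theorem eq_pair_or_eq_pair_of_cons_eq_append {s t : List α} {a b : α} (h : a :: s = t ++ [b])
    (hs : s ≠ []) (ht : t ≠ []) (hhead : s.head hs ≠ t.head ht)
    (hlast : s.getLast hs ≠ t.getLast ht) (hback : ∀ c d, c :: t ≠ s ++ [d]) :
    (∃ a c d : α, a ≠ c ∧ c ≠ d ∧ a ≠ d ∧ ({t, s} : Set (List α)) = {[a, c], [c, d]}) ∨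
    (∃ a b c d : α, ∃ w : List α, a ≠ c ∧ b ≠ d ∧ a :: c :: w ≠ w ++ [b, d] ∧
      ({t, s} : Set (List α)) = {a :: c :: (w ++ [b]), c :: (w ++ [b, d])}) := by
  obtain ⟨m, rfl, rfl⟩ : ∃ m, t = a :: m ∧ s = m ++ [b] := by
    rcases t with _ | ⟨a', m⟩
    · exact absurd rfl ht
    · obtain ⟨rfl, rfl⟩ := List.cons_eq_cons.mp h
      exact ⟨m, rfl, rfl⟩
  rcases m with _ | ⟨c, m⟩
  · exact absurd rfl (hback b a)
  rcases List.eq_nil_or_concat' m with rfl | ⟨w, b', rfl⟩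
  · refine .inl ⟨a, c, b, fun h => hhead (by simp [h]), fun h => hlast (by simp [h]), ?_, rfl⟩
    rintro rfl
    exact hback c c rfl
  · refine .inr ⟨a, b', c, b, w, fun h => hhead (by simp [h]), fun h => hlast (by simp [h]),
      fun h => hback c b' ?_, by simp⟩
    rw [← List.cons_append, ← List.cons_append, h]
    simp

end InsertionBall

theorem stmt_15_general (q : ℕ) (x y u v xt yt : List (Fin q))
    (hx : x = u ++ xt ++ v) (hy : y = u ++ yt ++ v)
    (hxt : xt ≠ []) (hyt : yt ≠ [])
    (hhead : ∀ (h1 : xt ≠ []) (h2 : yt ≠ []), xt.head h1 ≠ yt.head h2)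
    (hlast : ∀ (h1 : xt ≠ []) (h2 : yt ≠ []), xt.getLast h1 ≠ yt.getLast h2)
    (hcard : (iBall 1 x ∩ iBall 1 y).ncard = 1) :
    (∃ a c d : Fin q, a ≠ c ∧ c ≠ d ∧ a ≠ d ∧
      ({xt, yt} : Set (List (Fin q))) = {[a, c], [c, d]}) ∨
    (∃ a b c d : Fin q, ∃ w : List (Fin q), a ≠ c ∧ b ≠ d ∧
      a :: c :: w ≠ w ++ [b, d] ∧
      ({xt, yt} : Set (List (Fin q))) =
        {a :: c :: (w ++ [b]), c :: (w ++ [b, d])}) := by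
  subst hx hy
  have hne : xt ≠ yt := by rintro rfl; exact hhead hxt hxt rfl
  obtain ⟨z, hz⟩ := Set.ncard_eq_one.mp hcard
  rcases cons_eq_append_of_mem_iBall_inter hxt hyt (hhead hxt hyt) (hlast hxt hyt)
    (hz ▸ Set.mem_singleton z) with ⟨a, b, h⟩ | ⟨a, b, h⟩
  · rw [Set.pair_comm]
    exact eq_pair_or_eq_pair_of_cons_eq_append h hxt hyt (hhead hxt hyt) (hlast hxt hyt)
      fun c d hback => ncard_iBall_inter_ne_one_of_cons_eq_append h hback hne hcard
  · rw [Set.inter_comm] at hcard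
    exact eq_pair_or_eq_pair_of_cons_eq_append h hyt hxt (hhead hxt hyt).symm
      (hlast hxt hyt).symm
      fun c d hback => ncard_iBall_inter_ne_one_of_cons_eq_append h hback hne.symm hcard

theorem stmt_15 (q n : ℕ) (x y u v xt yt : List (Fin q))
    (hx : x = u ++ xt ++ v) (hy : y = u ++ yt ++ v)
    (hxn : x.length = n) (hyn : y.length = n) (hxy : x ≠ y)
    (hxt : xt ≠ []) (hyt : yt ≠ [])
    (hhead : ∀ (h1 : xt ≠ []) (h2 : yt ≠ []), xt.head h1 ≠ yt.head h2)
    (hlast : ∀ (h1 : xt ≠ []) (h2 : yt ≠ []), xt.getLast h1 ≠ yt.getLast h2)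
    (hcard : (iBall 1 x ∩ iBall 1 y).ncard = 1) :
    (∃ a c d : Fin q, a ≠ c ∧ c ≠ d ∧ a ≠ d ∧
      ({xt, yt} : Set (List (Fin q))) = {[a, c], [c, d]}) ∨
    (∃ a b c d : Fin q, ∃ w : List (Fin q), a ≠ c ∧ b ≠ d ∧
      a :: c :: w ≠ w ++ [b, d] ∧
      ({xt, yt} : Set (List (Fin q))) =
        {a :: c :: (w ++ [b]), c :: (w ++ [b, d])}) :=
  stmt_15_general q x y u v xt yt hx hy hxt hyt hhead hlast hcard
end

section
/- Let x, y ∈ Σ_q^n be distinct with binary matrix representations M(x), M(y) of ⌈log₂ q⌉ rows each. If I_2(x) ∩ I_2(y) ≠ ∅, then there exists a row index i such that M_i(x) ≠ M_i(y) and I_2(M_i(x)) ∩ I_2(M_i(y)) ≠ ∅. -/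
/-- Row k (0-indexed bit k) of the binary matrix representation of a q-ary sequence. -/
def row (q : ℕ) (k : ℕ) (x : List (Fin q)) : List (Fin 2) :=
  x.map (fun s => if Nat.testBit s.val k then 1 else 0)

theorem stmt_18 (q n : ℕ) (hq : 2 ≤ q) (x y : List (Fin q))
    (hx : x.length = n) (hy : y.length = n) (hxy : x ≠ y)
    (hne : (iBall 2 x ∩ iBall 2 y).Nonempty) :
    ∃ k < Nat.clog 2 q,
      row q k x ≠ row q k y ∧
      (iBall 2 (row q k x) ∩ iBall 2 (row q k y)).Nonempty := by
  obtain ⟨z, ⟨hzx, hzxl⟩, ⟨hzy, hzyl⟩⟩ := hne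
  have hlen : x.length = y.length := by rw [hx, hy]
  -- find an index where x and y differ
  have hidx : ∃ i, ∃ hi : i < n, x[i]'(by omega) ≠ y[i]'(by omega) := by
    by_contra h
    push_neg at h
    exact hxy (List.ext_getElem hlen (fun i h1 h2 => h i (by omega)))
  obtain ⟨i, hi, hne'⟩ := hidx
  have hvne : (x[i]'(by omega)).val ≠ (y[i]'(by omega)).val :=
    fun h => hne' (Fin.ext h)
  -- find a bit where they differ
  have hbit : ∃ k, Nat.testBit (x[i]'(by omega)).val k ≠
      Nat.testBit (y[i]'(by omega)).val k := by
    by_contra h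
    push_neg at h
    exact hvne (Nat.eq_of_testBit_eq h)
  obtain ⟨k, hk⟩ := hbit
  have hqle : q ≤ 2 ^ Nat.clog 2 q := Nat.le_pow_clog (by norm_num) q
  have hklt : k < Nat.clog 2 q := by
    by_contra hle
    push_neg at hle
    have h2 : 2 ^ Nat.clog 2 q ≤ 2 ^ k := Nat.pow_le_pow_right (by norm_num) hle
    have hx' : (x[i]'(by omega)).val < 2 ^ k :=
      lt_of_lt_of_le (lt_of_lt_of_le (x[i]'(by omega)).isLt hqle) h2
    have hy' : (y[i]'(by omega)).val < 2 ^ k :=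
      lt_of_lt_of_le (lt_of_lt_of_le (y[i]'(by omega)).isLt hqle) h2
    rw [Nat.testBit_lt_two_pow hx', Nat.testBit_lt_two_pow hy'] at hk
    exact hk rfl
  refine ⟨k, hklt, ?_, ?_⟩
  · intro hrow
    have h1 : (row q k x)[i]'(by simp [row, hx, hi]) =
        (row q k y)[i]'(by simp [row, hy, hi]) := List.getElem_of_eq hrow _
    simp only [row, List.getElem_map] at h1
    rcases hb1 : Nat.testBit (x[i]'(by omega)).val k <;>
      rcases hb2 : Nat.testBit (y[i]'(by omega)).val k <;>
      simp [hb1, hb2] at h1 hk ⊢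
  · refine ⟨row q k z, ⟨hzx.map _, ?_⟩, ⟨hzy.map _, ?_⟩⟩ <;>
      simp [row, hzxl, hx, hy]
end
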